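/- Let u : ℝ × ℝ → ℝ be a smooth function of (x,t) with u_xxx(x,t) ≠ 0 for all (x,t), satisfying the evolution equation u_t = 1/u_xxx². Define p : ℝ × ℝ → ℝ by p = −2^{−1/3}·u_xx. Then p_x(x,t) ≠ 0 for all (x,t), and p satisfies ∂p/∂t = ∂/∂x ( p_xx/p_x³ ) at every point (x,t), i.e. the potential variable v with v_x = p solves v_t = v_xxx/v_xx³. -/

import Mathlib

/-!
Write `w = u_xxx` and `c = 2^{-1/3}`. Then `p_x = -c w`, and commuting `∂_t` past `∂_x²` gives
`p_t = -c ∂_x²(1/w²)`. On the other side `p_xx / p_x³ = w_x / (c² w³)`, which equals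
`-c ∂_x(1/w²) = 2c w_x / w³` exactly because `c³ = 1/2`.
-/

/-- Partial derivative with respect to the first (space) variable. -/
noncomputable def pdx (f : ℝ × ℝ → ℝ) : ℝ × ℝ → ℝ :=
  fun p => deriv (fun x => f (x, p.2)) p.1

/-- Partial derivative with respect to the second (time) variable. -/
noncomputable def pdt (f : ℝ × ℝ → ℝ) : ℝ × ℝ → ℝ :=
  fun p => deriv (fun t => f (p.1, t)) p.2

lemma fderiv_fderiv_apply_comm {E F : Type*} [NormedAddCommGroup E] [NormedSpace ℝ E]
    [NormedAddCommGroup F] [NormedSpace ℝ F] {f : E → F} (hf : ContDiff ℝ 2 f) (v w x : E) :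
    fderiv ℝ (fun y => fderiv ℝ f y v) x w = fderiv ℝ (fun y => fderiv ℝ f y w) x v := by
  have hdf : DifferentiableAt ℝ (fderiv ℝ f) x :=
    (hf.fderiv_right (m := 1) (by norm_num)).differentiable (by simp) x
  have hswap (v w : E) : fderiv ℝ (fun y => fderiv ℝ f y v) x w = fderiv ℝ (fderiv ℝ f) x w v := by
    rw [fderiv_clm_apply hdf (differentiableAt_const v)]
    simp
  rw [hswap, hswap]
  exact hf.contDiffAt.isSymmSndFDerivAt (by simp) w v

section PartialDerivatives

variable {f : ℝ × ℝ → ℝ} {q : ℝ × ℝ}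

lemma hasDerivAt_xSlice (hf : DifferentiableAt ℝ f q) :
    HasDerivAt (fun x => f (x, q.2)) (fderiv ℝ f q (1, 0)) q.1 :=
  hf.hasFDerivAt.comp_hasDerivAt q.1 ((hasDerivAt_id q.1).prodMk (hasDerivAt_const q.1 q.2))

lemma hasDerivAt_tSlice (hf : DifferentiableAt ℝ f q) :
    HasDerivAt (fun t => f (q.1, t)) (fderiv ℝ f q (0, 1)) q.2 :=
  hf.hasFDerivAt.comp_hasDerivAt q.2 ((hasDerivAt_const q.2 q.1).prodMk (hasDerivAt_id q.2))

lemma pdx_eq_fderiv (hf : DifferentiableAt ℝ f q) : pdx f q = fderiv ℝ f q (1, 0) :=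
  (hasDerivAt_xSlice hf).deriv

lemma pdt_eq_fderiv (hf : DifferentiableAt ℝ f q) : pdt f q = fderiv ℝ f q (0, 1) :=
  (hasDerivAt_tSlice hf).deriv

lemma hasDerivAt_pdx (hf : DifferentiableAt ℝ f q) :
    HasDerivAt (fun x => f (x, q.2)) (pdx f q) q.1 :=
  pdx_eq_fderiv hf ▸ hasDerivAt_xSlice hf

lemma pdx_const_mul (a : ℝ) (f : ℝ × ℝ → ℝ) : pdx (fun r => a * f r) = fun r => a * pdx f r :=
  funext fun _ => deriv_const_mul_field _

lemma pdt_const_mul (a : ℝ) (f : ℝ × ℝ → ℝ) : pdt (fun r => a * f r) = fun r => a * pdt f r :=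
  funext fun _ => deriv_const_mul_field _

lemma contDiff_pdx {m n : WithTop ℕ∞} (hf : ContDiff ℝ n f) (hmn : m + 1 ≤ n) :
    ContDiff ℝ m (pdx f) := by
  have hf1 : Differentiable ℝ f := hf.differentiable (by rintro rfl; simp at hmn)
  rw [show pdx f = fun r => fderiv ℝ f r (1, 0) from funext fun r => pdx_eq_fderiv (hf1 r)]
  exact (hf.fderiv_right hmn).clm_apply contDiff_const

lemma contDiff_infty_pdx (hf : ContDiff ℝ (⊤ : ℕ∞) f) : ContDiff ℝ (⊤ : ℕ∞) (pdx f) :=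
  contDiff_pdx hf (by exact_mod_cast le_top)

lemma pdt_pdx_comm (hf : ContDiff ℝ 2 f) : pdt (pdx f) = pdx (pdt f) := by
  have hf1 : Differentiable ℝ f := hf.differentiable (by simp)
  have hd (v : ℝ × ℝ) : Differentiable ℝ (fun r => fderiv ℝ f r v) :=
    ((hf.fderiv_right (m := 1) (by norm_num)).clm_apply contDiff_const).differentiable (by simp)
  have hx : pdx f = fun r => fderiv ℝ f r (1, 0) := funext fun r => pdx_eq_fderiv (hf1 r)
  have ht : pdt f = fun r => fderiv ℝ f r (0, 1) := funext fun r => pdt_eq_fderiv (hf1 r)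
  ext r
  rw [hx, ht, pdt_eq_fderiv (hd _ r), pdx_eq_fderiv (hd _ r)]
  exact fderiv_fderiv_apply_comm hf _ _ r

lemma pdx_one_div_sq (hf : DifferentiableAt ℝ f q) (hq : f q ≠ 0) :
    pdx (fun r => 1 / f r ^ 2) q = -2 * pdx f q / f q ^ 3 := by
  have h := ((hasDerivAt_pdx hf).fun_pow 2).inv (pow_ne_zero 2 hq)
  simp only [Prod.mk.eta] at h
  simp only [one_div]
  refine h.deriv.trans ?_
  field_simp
  ring

end PartialDerivatives

lemma two_rpow_neg_one_third_pow_three : ((2 : ℝ) ^ (-(1 : ℝ) / 3)) ^ 3 = 1 / 2 := by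
  rw [← Real.rpow_natCast, ← Real.rpow_mul zero_le_two]
  norm_num

/-- Potentialisation of Case 2: for a solution of `u_t = 1/u_xxx²`, the variable
`p = −2^{−1/3} u_xx` has `p_x ≠ 0` and satisfies the compatibility identity
`p_t = D_x( p_xx/p_x³ )`, i.e. the potential `v` with `v_x = p` solves
`v_t = v_xxx/v_xx³`. -/
theorem potentialisation_case2
    (u : ℝ × ℝ → ℝ) (hu : ContDiff ℝ (⊤ : ℕ∞) u)
    (huxxx : ∀ q : ℝ × ℝ, pdx (pdx (pdx u)) q ≠ 0)
    (heq : ∀ q : ℝ × ℝ, pdt u q = 1 / (pdx (pdx (pdx u)) q) ^ 2)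
    (p : ℝ × ℝ → ℝ)
    (hp : p = fun q => -(2 : ℝ) ^ (-(1 : ℝ) / 3) * pdx (pdx u) q)
    (G : ℝ × ℝ → ℝ)
    (hG : G = fun q => pdx (pdx p) q / (pdx p q) ^ 3) :
    (∀ q : ℝ × ℝ, pdx p q ≠ 0) ∧ (∀ q : ℝ × ℝ, pdt p q = pdx G q) := by
  set c : ℝ := (2 : ℝ) ^ (-(1 : ℝ) / 3)
  set w := pdx (pdx (pdx u))
  have hc : c ^ 3 = 1 / 2 := two_rpow_neg_one_third_pow_three
  have hc0 : c ≠ 0 := by positivity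
  have hu1 := contDiff_infty_pdx hu
  have hu2 := contDiff_infty_pdx hu1
  have hw : Differentiable ℝ w := (contDiff_infty_pdx hu2).differentiable (by simp)
  have hpx : pdx p = fun q => -c * w q := by rw [hp, pdx_const_mul]
  have hG_eq : G = fun q => -c * pdx (fun r => 1 / w r ^ 2) q := by
    ext q
    rw [hG, hpx, pdx_const_mul, pdx_one_div_sq (hw q) (huxxx q)]
    field_simp
    rw [hc]
    ring
  refine ⟨fun q => ?_, fun q => ?_⟩
  · rw [hpx]
    exact mul_ne_zero (neg_ne_zero.2 hc0) (huxxx q)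
  · calc pdt p q = -c * pdt (pdx (pdx u)) q := by rw [hp, pdt_const_mul]
      _ = -c * pdx (pdx (pdt u)) q := by
        rw [pdt_pdx_comm (hu1.of_le (WithTop.coe_le_coe.2 le_top)),
          pdt_pdx_comm (hu.of_le (WithTop.coe_le_coe.2 le_top))]
      _ = pdx G q := by rw [hG_eq, pdx_const_mul, funext heq]
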